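/- Let H ⊆ V(T_n) with w(H) ≥ δn for δ ∈ (0,1), and set ε = h^{−1}(δ) where h is the binary entropy function restricted to (0,1/2]. Then H contains a replica of T_d with d = ⌊εn⌋, and the set of levels of T_n occupied by this replica is a subset of {0,1,…,n−1} of size ⌊εn⌋. -/

import Mathlib

/-!
The set `S(H)` of signatures (level sets of replicas inside `H`) satisfies `|S(H)| ≥ 2^{w(H)}`.
Induct on the depth, splitting `H` at the root into `H₀` and `H₁`: signatures of `H₀` and of
`H₁`, shifted down one level, are signatures of `H`, and if the root lies in `H` every signature
common to `H₀` and `H₁` yields one more signature of `H` containing level `0`.  Hence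
`|S(H)| ≥ |S(H₀)| + |S(H₁)| ≥ 2^{w(H₀)} + 2^{w(H₁)} ≥ 2^{1 + (w(H₀) + w(H₁))/2} = 2^{w(H)}`
(and `|S(H)| ≥ max |S(Hᵢ)|` without the root).

A signature of a replica of `T_d` is a `d`-subset of `{0, …, n-1}`.  If all signatures had fewer
than `d = ⌊εn⌋` elements, then `|S(H)| ≤ ∑_{i<d} C(n,i) < 2^{h(ε)n} ≤ 2^{w(H)}`, a contradiction;
a replica of `T_{d'}` with `d' ≥ d` restricts to one of `T_d`.
-/

/-- Vertex set of the full binary tree `T_n` of depth `n-1`: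
binary strings of length `< n`; the level of a vertex is its length. -/
def treeVerts (n : ℕ) : Set (List Bool) := {x | x.length < n}

/-- Weight of a set of vertices: `w(H) = Σ_{x ∈ H} 2^(-level x)`. -/
noncomputable def weight (H : Set (List Bool)) : ℝ :=
  ∑' x : H, (2 : ℝ) ^ (-((x : List Bool).length : ℤ))

/-- `f` is a regular embedding of `T_d`: vertices at equal levels map to equal
levels, and the two children of each vertex map to descendants of distinct
children of the image (descendant = extension of the string). -/
def IsRegEmb (d : ℕ) (f : List Bool → List Bool) : Prop :=
  (∀ x y : List Bool, x.length < d → y.length < d → x.length = y.length →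
      (f x).length = (f y).length) ∧
  (∀ x : List Bool, x.length + 1 < d → ∃ c : Bool,
      (f x ++ [c]) <+: f (x ++ [false]) ∧ (f x ++ [!c]) <+: f (x ++ [true]))

/-- `S(H)`: the set of signatures (sets of occupied levels) of all regular
embeddings of some `T_d`, `d ≥ 0`, into `H`. -/
def sigs (H : Set (List Bool)) : Set (Set ℕ) :=
  {σ | ∃ (d : ℕ) (f : List Bool → List Bool), IsRegEmb d f ∧
      (∀ x : List Bool, x.length < d → f x ∈ H) ∧
      σ = {l : ℕ | ∃ x : List Bool, x.length < d ∧ (f x).length = l}}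

lemma treeVerts_finite (n : ℕ) : (treeVerts n).Finite := List.finite_length_lt Bool n

lemma preimage_cons_treeVerts_succ (b : Bool) (n : ℕ) :
    List.cons b ⁻¹' treeVerts (n + 1) = treeVerts n := by
  ext x
  simp [treeVerts]

section Weight

lemma weight_empty : weight ∅ = 0 := tsum_empty

lemma weight_singleton_nil : weight {[]} = 1 := by
  simp [weight]

lemma weight_union {s t : Set (List Bool)} (hs : s.Finite) (ht : t.Finite) (hst : Disjoint s t) :
    weight (s ∪ t) = weight s + weight t := by
  have := hs.to_subtype
  have := ht.to_subtype
  exact Summable.tsum_union_disjoint (f := fun x : List Bool => (2 : ℝ) ^ (-(x.length : ℤ))) hst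
    .of_finite .of_finite

lemma weight_image_cons (b : Bool) (s : Set (List Bool)) :
    weight (List.cons b '' s) = weight s / 2 := by
  rw [weight, tsum_image (fun x : List Bool => (2 : ℝ) ^ (-(x.length : ℤ)))
    List.cons_injective.injOn, weight, ← tsum_div_const]
  congr 1
  ext x
  rw [List.length_cons, Nat.cast_succ, neg_add, zpow_add₀ two_ne_zero, zpow_neg_one,
    div_eq_mul_inv]

lemma eq_inter_nil_union_image_cons (H : Set (List Bool)) :
    H = H ∩ {[]} ∪ (List.cons false '' (List.cons false ⁻¹' H) ∪
      List.cons true '' (List.cons true ⁻¹' H)) := by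
  ext (_ | ⟨_ | _, t⟩) <;> simp

lemma weight_eq_of_finite {H : Set (List Bool)} (hH : H.Finite) :
    weight H = weight (H ∩ {[]}) +
      (weight (List.cons false ⁻¹' H) + weight (List.cons true ⁻¹' H)) / 2 := by
  have hfin (b : Bool) : (List.cons b '' (List.cons b ⁻¹' H)).Finite :=
    hH.subset (Set.image_preimage_subset _ _)
  conv_lhs => rw [eq_inter_nil_union_image_cons H]
  rw [weight_union (hH.subset Set.inter_subset_left) ((hfin false).union (hfin true)),
    weight_union (hfin false) (hfin true), weight_image_cons, weight_image_cons, add_div]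
  · rw [Set.disjoint_left]
    rintro _ ⟨t, -, rfl⟩ ⟨s, -, h⟩
    simp at h
  · rw [Set.disjoint_left]
    rintro _ ⟨-, rfl⟩ (⟨t, -, h⟩ | ⟨t, -, h⟩) <;> simp at h

end Weight

section Embedding

variable {d : ℕ} {f f₀ f₁ : List Bool → List Bool}

def levels (d : ℕ) (f : List Bool → List Bool) : Set ℕ :=
  {l : ℕ | ∃ x : List Bool, x.length < d ∧ (f x).length = l}

def level (f : List Bool → List Bool) (i : ℕ) : ℕ :=
  (f (List.replicate i false)).length

lemma IsRegEmb.mono {d' : ℕ} (hf : IsRegEmb d' f) (hd : d ≤ d') : IsRegEmb d f :=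
  ⟨fun x y hx hy => hf.1 x y (hx.trans_le hd) (hy.trans_le hd), fun x hx => hf.2 x (by omega)⟩

lemma IsRegEmb.length_lt_length_append (hf : IsRegEmb d f) {x : List Bool}
    (hx : x.length + 1 < d) (b : Bool) : (f x).length < (f (x ++ [b])).length := by
  obtain ⟨c, h₀, h₁⟩ := hf.2 x hx
  cases b
  · simpa using h₀.length_le
  · simpa using h₁.length_le

lemma IsRegEmb.length_lt_length (hf : IsRegEmb d f) {x y : List Bool} (hy : y.length < d)
    (hxy : x.length < y.length) : (f x).length < (f y).length := by
  induction y using List.reverseRecOn with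
  | nil => simp at hxy
  | append_singleton y b ih =>
    simp only [List.length_append, List.length_singleton] at hy hxy
    have hstep := hf.length_lt_length_append hy b
    rcases Nat.lt_succ_iff_lt_or_eq.mp hxy with hlt | heq
    · exact (ih (by omega) hlt).trans hstep
    · rwa [hf.1 x y (by omega) (by omega) heq]

lemma IsRegEmb.length_eq_level (hf : IsRegEmb d f) {x : List Bool} (hx : x.length < d) :
    (f x).length = level f x.length :=
  hf.1 _ _ hx (by simpa using hx) (by simp)

lemma IsRegEmb.strictMonoOn_level (hf : IsRegEmb d f) : StrictMonoOn (level f) (Set.Iio d) :=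
  fun _ _ _ hj hij => hf.length_lt_length (by simpa using hj) (by simpa using hij)

lemma IsRegEmb.levels_eq_image (hf : IsRegEmb d f) : levels d f = level f '' Set.Iio d := by
  ext l
  constructor
  · rintro ⟨x, hx, rfl⟩
    exact ⟨x.length, hx, (hf.length_eq_level hx).symm⟩
  · rintro ⟨i, hi, rfl⟩
    exact ⟨List.replicate i false, by simpa using hi, rfl⟩

lemma IsRegEmb.ncard_levels (hf : IsRegEmb d f) : (levels d f).ncard = d := by
  rw [hf.levels_eq_image, hf.strictMonoOn_level.injOn.ncard_image, Set.ncard_Iio_nat]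

/-- `level f` enumerates `levels d f` increasingly, hence is determined by it. -/
lemma IsRegEmb.level_eq_of_levels_eq (h₀ : IsRegEmb d f₀) (h₁ : IsRegEmb d f₁)
    (h : levels d f₀ = levels d f₁) {i : ℕ} (hi : i < d) : level f₀ i = level f₁ i := by
  have hmono {f} (hf : IsRegEmb d f) : StrictMono fun j : Fin d => level f j :=
    fun a b hab => hf.strictMonoOn_level a.2 b.2 hab
  have hrange {f} (hf : IsRegEmb d f) : Set.range (fun j : Fin d => level f j) = levels d f := by
    rw [hf.levels_eq_image]
    ext l
    exact ⟨fun ⟨j, hj⟩ => ⟨j, j.2, hj⟩, fun ⟨j, hj, hl⟩ => ⟨⟨j, hj⟩, hl⟩⟩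
  have := ((hmono h₀).range_inj (hmono h₁)).mp (by rw [hrange h₀, hrange h₁, h])
  exact congrFun this ⟨i, hi⟩

lemma IsRegEmb.cons (hf : IsRegEmb d f) (b : Bool) : IsRegEmb d (List.cons b ∘ f) :=
  ⟨fun x y hx hy hxy => by simpa using hf.1 x y hx hy hxy,
    fun x hx => let ⟨c, h₀, h₁⟩ := hf.2 x hx; ⟨c, by simpa using h₀, by simpa using h₁⟩⟩

lemma levels_cons (b : Bool) (d : ℕ) (f : List Bool → List Bool) :
    levels d (List.cons b ∘ f) = (· + 1) '' levels d f := by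
  ext l
  simp only [levels, Set.mem_ofPred_eq, Set.mem_image, Function.comp_apply, List.length_cons]
  constructor
  · rintro ⟨x, hx, rfl⟩
    exact ⟨_, ⟨x, hx, rfl⟩, rfl⟩
  · rintro ⟨_, ⟨x, hx, rfl⟩, rfl⟩
    exact ⟨x, hx, rfl⟩

def graft (f₀ f₁ : List Bool → List Bool) : List Bool → List Bool
  | [] => []
  | b :: t => b :: cond b f₁ f₀ t

lemma isRegEmb_graft (h₀ : IsRegEmb d f₀) (h₁ : IsRegEmb d f₁) (h : levels d f₀ = levels d f₁) :
    IsRegEmb (d + 1) (graft f₀ f₁) := by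
  have hb (b : Bool) : IsRegEmb d (cond b f₁ f₀) := by cases b <;> assumption
  have hlen (b : Bool) (t : List Bool) (ht : t.length < d) :
      (cond b f₁ f₀ t).length = level f₀ t.length := by
    cases b
    · exact h₀.length_eq_level ht
    · rw [cond_true, h₁.length_eq_level ht, h₀.level_eq_of_levels_eq h₁ h ht]
  constructor
  · rintro (_ | ⟨b, x⟩) (_ | ⟨b', y⟩) hx hy hxy
    · rfl
    · simp at hxy
    · simp at hxy
    · simp only [List.length_cons, Nat.add_lt_add_iff_right, Nat.add_right_cancel_iff] at hx hy hxy
      simp only [graft, List.length_cons, hlen b x hx, hlen b' y hy, hxy]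
  · rintro (_ | ⟨b, x⟩) hx
    · exact ⟨false, by simp [graft], by simp [graft]⟩
    · obtain ⟨c, hc₀, hc₁⟩ := (hb b).2 x (by simpa using hx)
      exact ⟨c, by simpa [graft] using hc₀, by simpa [graft] using hc₁⟩

lemma levels_graft (d : ℕ) (f₀ f₁ : List Bool → List Bool) :
    levels (d + 1) (graft f₀ f₁) = insert 0 ((· + 1) '' (levels d f₀ ∪ levels d f₁)) := by
  ext l
  constructor
  · rintro ⟨_ | ⟨_ | _, t⟩, ht, rfl⟩
    · exact Or.inl rfl
    · exact Or.inr ⟨_, Or.inl ⟨t, by simpa using ht, rfl⟩, rfl⟩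
    · exact Or.inr ⟨_, Or.inr ⟨t, by simpa using ht, rfl⟩, rfl⟩
  · rintro (rfl | ⟨_, ⟨t, ht, rfl⟩ | ⟨t, ht, rfl⟩, rfl⟩)
    · exact ⟨[], by simp, rfl⟩
    · exact ⟨false :: t, by simpa using ht, rfl⟩
    · exact ⟨true :: t, by simpa using ht, rfl⟩

end Embedding

section Signatures

variable {n : ℕ} {H : Set (List Bool)} {σ : Set ℕ}

lemma mem_sigs_iff : σ ∈ sigs H ↔ ∃ (d : ℕ) (f : List Bool → List Bool), IsRegEmb d f ∧
    (∀ x : List Bool, x.length < d → f x ∈ H) ∧ σ = levels d f :=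
  Iff.rfl

lemma empty_mem_sigs (H : Set (List Bool)) : ∅ ∈ sigs H :=
  ⟨0, id, ⟨by simp, by simp⟩, by simp, by simp⟩

lemma image_succ_mem_sigs (b : Bool) (hσ : σ ∈ sigs (List.cons b ⁻¹' H)) :
    (· + 1) '' σ ∈ sigs H := by
  obtain ⟨d, f, hf, hfH, rfl⟩ := mem_sigs_iff.mp hσ
  exact ⟨d, List.cons b ∘ f, hf.cons b, hfH, (levels_cons b d f).symm⟩

lemma insert_zero_image_succ_mem_sigs (hH : [] ∈ H) (h₀ : σ ∈ sigs (List.cons false ⁻¹' H))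
    (h₁ : σ ∈ sigs (List.cons true ⁻¹' H)) : insert 0 ((· + 1) '' σ) ∈ sigs H := by
  obtain ⟨d, f₀, hf₀, hf₀H, rfl⟩ := mem_sigs_iff.mp h₀
  obtain ⟨d₁, f₁, hf₁, hf₁H, h⟩ := mem_sigs_iff.mp h₁
  have hd : d₁ = d := by
    rw [← hf₁.ncard_levels, ← hf₀.ncard_levels]
    exact congrArg Set.ncard h.symm
  rw [hd] at hf₁ hf₁H h
  refine mem_sigs_iff.mpr ⟨d + 1, graft f₀ f₁, isRegEmb_graft hf₀ hf₁ h, ?_, ?_⟩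
  · rintro (_ | ⟨_ | _, x⟩) hx
    · exact hH
    · exact hf₀H x (by simpa using hx)
    · exact hf₁H x (by simpa using hx)
  · rw [levels_graft, ← h, Set.union_self]

lemma subset_Iio_of_mem_sigs (hH : H ⊆ treeVerts n) (hσ : σ ∈ sigs H) : σ ⊆ Set.Iio n := by
  obtain ⟨d, f, -, hfH, rfl⟩ := mem_sigs_iff.mp hσ
  rintro _ ⟨x, hx, rfl⟩
  exact hH (hfH x hx)

lemma sigs_finite (hH : H ⊆ treeVerts n) : (sigs H).Finite :=
  (Set.finite_Iio n).finite_subsets.subset fun _ hσ => subset_Iio_of_mem_sigs hH hσ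

lemma image_succ_injective : Function.Injective (Set.image (· + 1 : ℕ → ℕ)) :=
  Set.image_injective.mpr (add_left_injective 1)

lemma zero_notMem_image_succ (s : Set ℕ) : 0 ∉ (· + 1) '' s := by
  rintro ⟨_, -, h⟩
  exact Nat.succ_ne_zero _ h

lemma ncard_sigs_preimage_cons_le (hH : (sigs H).Finite) (b : Bool) :
    (sigs (List.cons b ⁻¹' H)).ncard ≤ (sigs H).ncard :=
  Set.ncard_le_ncard_of_injOn _ (fun _ hσ => image_succ_mem_sigs b hσ)
    image_succ_injective.injOn hH

lemma ncard_sigs_add_ncard_sigs_le (hH : (sigs H).Finite) (hroot : [] ∈ H) :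
    (sigs (List.cons false ⁻¹' H)).ncard + (sigs (List.cons true ⁻¹' H)).ncard ≤
      (sigs H).ncard := by
  set A := Set.image (· + 1) '' sigs (List.cons false ⁻¹' H)
  set B := Set.image (· + 1) '' sigs (List.cons true ⁻¹' H)
  have hA : A ⊆ sigs H := Set.image_subset_iff.mpr fun _ => image_succ_mem_sigs false
  have hB : B ⊆ sigs H := Set.image_subset_iff.mpr fun _ => image_succ_mem_sigs true
  have hC : insert 0 '' (A ∩ B) ⊆ sigs H := by
    rintro _ ⟨_, ⟨⟨σ, hσ₀, rfl⟩, ⟨τ, hτ₁, hτ⟩⟩, rfl⟩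
    rw [image_succ_injective hτ] at hτ₁
    exact insert_zero_image_succ_mem_sigs hroot hσ₀ hτ₁
  have hinsert : Set.InjOn (insert 0) (A ∩ B) := by
    rintro _ ⟨⟨σ, -, rfl⟩, -⟩ _ ⟨⟨τ, -, rfl⟩, -⟩ h
    rw [← Set.insert_sdiff_self_of_notMem (zero_notMem_image_succ σ), h,
      Set.insert_sdiff_self_of_notMem (zero_notMem_image_succ τ)]
  have hdisj : Disjoint (A ∪ B) (insert 0 '' (A ∩ B)) := by
    rw [Set.disjoint_left]
    rintro _ (⟨σ, -, rfl⟩ | ⟨σ, -, rfl⟩) ⟨τ, -, hτ⟩ <;>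
      exact zero_notMem_image_succ σ (hτ ▸ Set.mem_insert 0 τ)
  calc _ = A.ncard + B.ncard := by
          rw [image_succ_injective.injOn.ncard_image, image_succ_injective.injOn.ncard_image]
    _ = (A ∪ B).ncard + (A ∩ B).ncard :=
          (Set.ncard_union_add_ncard_inter A B (hH.subset hA) (hH.subset hB)).symm
    _ = (A ∪ B ∪ insert 0 '' (A ∩ B)).ncard := by
          rw [← hinsert.ncard_image, Set.ncard_union_eq hdisj (hH.subset (Set.union_subset hA hB))
            (hH.subset hC)]
    _ ≤ (sigs H).ncard := Set.ncard_le_ncard (Set.union_subset (Set.union_subset hA hB) hC) hH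

end Signatures

lemma two_rpow_add_div_two_le (a b : ℝ) : (2 : ℝ) ^ ((a + b) / 2) ≤ (2 ^ a + 2 ^ b) / 2 := by
  have := (convexOn_rpow_left two_pos).2 (Set.mem_univ a) (Set.mem_univ b)
    (by norm_num : (0 : ℝ) ≤ 1 / 2) (by norm_num : (0 : ℝ) ≤ 1 / 2) (by norm_num)
  simp only [smul_eq_mul] at this
  rw [show (a + b) / 2 = 1 / 2 * a + 1 / 2 * b by ring]
  linarith

theorem two_rpow_weight_le_ncard_sigs (n : ℕ) {H : Set (List Bool)} (hH : H ⊆ treeVerts n) :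
    (2 : ℝ) ^ weight H ≤ (sigs H).ncard := by
  induction n generalizing H with
  | zero =>
    obtain rfl : H = ∅ := Set.subset_empty_iff.mp fun x hx => by simpa [treeVerts] using hH hx
    have : 0 < (sigs ∅).ncard :=
      (Set.ncard_pos (sigs_finite (n := 0) (by simp))).mpr ⟨∅, empty_mem_sigs ∅⟩
    rw [weight_empty, Real.rpow_zero]
    exact Nat.one_le_cast.mpr this
  | succ n ih =>
    have hsub (b : Bool) : List.cons b ⁻¹' H ⊆ treeVerts n :=
      preimage_cons_treeVerts_succ b n ▸ Set.preimage_mono hH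
    have ih₀ := ih (hsub false)
    have ih₁ := ih (hsub true)
    have hfin := sigs_finite hH
    have hle (b : Bool) : ((sigs (List.cons b ⁻¹' H)).ncard : ℝ) ≤ (sigs H).ncard := by
      exact_mod_cast ncard_sigs_preimage_cons_le hfin b
    have hmid := two_rpow_add_div_two_le (weight (List.cons false ⁻¹' H))
      (weight (List.cons true ⁻¹' H))
    rw [weight_eq_of_finite ((treeVerts_finite _).subset hH)]
    by_cases hroot : [] ∈ H
    · have hsum : ((sigs (List.cons false ⁻¹' H)).ncard : ℝ) +
          (sigs (List.cons true ⁻¹' H)).ncard ≤ (sigs H).ncard := by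
        exact_mod_cast ncard_sigs_add_ncard_sigs_le hfin hroot
      rw [Set.inter_singleton_of_mem hroot, weight_singleton_nil,
        Real.rpow_add two_pos, Real.rpow_one]
      linarith
    · rw [Set.inter_singleton_eq_empty.mpr hroot, weight_empty, zero_add]
      linarith [hle false, hle true]

lemma exists_regEmb_of_mem_sigs {n d : ℕ} {H : Set (List Bool)} (hH : H ⊆ treeVerts n)
    {σ : Set ℕ} (hσ : σ ∈ sigs H) (hd : d ≤ σ.ncard) :
    ∃ f : List Bool → List Bool, IsRegEmb d f ∧ (∀ x : List Bool, x.length < d → f x ∈ H) ∧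
      levels d f ⊆ Set.Iio n ∧ (levels d f).ncard = d := by
  obtain ⟨d', f, hf, hfH, rfl⟩ := mem_sigs_iff.mp hσ
  rw [hf.ncard_levels] at hd
  have hfH' (x : List Bool) (hx : x.length < d) : f x ∈ H := hfH x (hx.trans_le hd)
  refine ⟨f, hf.mono hd, hfH', ?_, (hf.mono hd).ncard_levels⟩
  rintro _ ⟨x, hx, rfl⟩
  exact hH (hfH' x hx)

lemma card_filter_powerset_card_lt {α : Type*} [DecidableEq α] (s : Finset α) (d : ℕ) :
    (s.powerset.filter (·.card < d)).card = ∑ i ∈ Finset.range d, s.card.choose i := by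
  rw [Finset.card_eq_sum_card_fiberwise (f := Finset.card) (t := Finset.range d)
    fun t ht => Finset.mem_range.mpr (Finset.mem_filter.mp ht).2]
  refine Finset.sum_congr rfl fun i hi => ?_
  rw [Finset.filter_filter, ← Finset.card_powersetCard, Finset.powersetCard_eq_filter]
  congr 1
  refine Finset.filter_congr fun t _ => ?_
  constructor
  · exact And.right
  · rintro rfl
    exact ⟨Finset.mem_range.mp hi, rfl⟩

lemma ncard_le_sum_choose {n d : ℕ} {𝒮 : Set (Set ℕ)}
    (h𝒮 : ∀ σ ∈ 𝒮, σ ⊆ Set.Iio n ∧ σ.ncard < d) :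
    𝒮.ncard ≤ ∑ i ∈ Finset.range d, n.choose i := by
  classical
  have hcoe (σ : Set ℕ) (hσ : σ ⊆ Set.Iio n) : (((Finset.range n).filter (· ∈ σ) : Finset ℕ) :
      Set ℕ) = σ := by
    ext l
    simpa using fun hl => hσ hl
  calc 𝒮.ncard ≤ (((Finset.range n).powerset.filter (·.card < d) : Finset (Finset ℕ)) :
        Set (Finset ℕ)).ncard := by
        refine Set.ncard_le_ncard_of_injOn (fun σ => (Finset.range n).filter (· ∈ σ))
          (fun σ hσ => ?_) (fun σ hσ τ hτ hστ => ?_) (Finset.finite_toSet _)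
        · rw [Finset.mem_coe, Finset.mem_filter, Finset.mem_powerset, ← Set.ncard_coe_finset,
            hcoe σ (h𝒮 σ hσ).1]
          exact ⟨Finset.filter_subset _ _, (h𝒮 σ hσ).2⟩
        · rw [← hcoe σ (h𝒮 σ hσ).1, ← hcoe τ (h𝒮 τ hτ).1]
          exact congrArg _ hστ
    _ = ∑ i ∈ Finset.range d, n.choose i := by
        rw [Set.ncard_coe_finset, card_filter_powerset_card_lt, Finset.card_range]

section Entropy

open Real

variable {ε : ℝ}

/-- As `ε ≤ 1 - ε`, the term `ε^i (1-ε)^(n-i)` decreases in `i`, and at `i = εn` it equals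
`2^{-h(ε)n}`. -/
lemma two_rpow_neg_entropy_mul_le (hε0 : 0 < ε) (hε2 : ε ≤ 1 / 2) {n i : ℕ} (hin : i ≤ n)
    (hi : (i : ℝ) ≤ ε * n) :
    (2 : ℝ) ^ (-((-ε * logb 2 ε - (1 - ε) * logb 2 (1 - ε)) * n)) ≤
      ε ^ i * (1 - ε) ^ (n - i) := by
  have hε1 : 0 < 1 - ε := by linarith
  have hlog : log ε ≤ log (1 - ε) := log_le_log hε0 (by linarith)
  rw [← rpow_natCast, ← rpow_natCast, rpow_def_of_pos two_pos, rpow_def_of_pos hε0,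
    rpow_def_of_pos hε1, ← exp_add, exp_le_exp, Nat.cast_sub hin]
  simp only [logb]
  field_simp
  nlinarith [mul_nonneg (sub_nonneg.mpr hi) (sub_nonneg.mpr hlog)]

theorem sum_choose_lt_two_rpow_entropy_mul (hε0 : 0 < ε) (hε2 : ε ≤ 1 / 2) {n d : ℕ}
    (hd : (d : ℝ) ≤ ε * n) :
    ∑ i ∈ Finset.range d, (n.choose i : ℝ) <
      2 ^ ((-ε * logb 2 ε - (1 - ε) * logb 2 (1 - ε)) * n) := by
  set x := (-ε * logb 2 ε - (1 - ε) * logb 2 (1 - ε)) * n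
  have hdn : d ≤ n := by
    have : ε * n ≤ n := by nlinarith [(n.cast_nonneg : (0 : ℝ) ≤ n)]
    exact_mod_cast hd.trans this
  have hterm (i : ℕ) (hi : i < d) :
      (n.choose i : ℝ) * 2 ^ (-x) ≤ ε ^ i * (1 - ε) ^ (n - i) * n.choose i := by
    have hi' : (i : ℝ) ≤ ε * n := by
      have : (i : ℝ) < d := by exact_mod_cast hi
      linarith
    rw [mul_comm]
    exact mul_le_mul_of_nonneg_right
      (two_rpow_neg_entropy_mul_le hε0 hε2 (by omega) hi') (Nat.cast_nonneg _)
  have hpos (i : ℕ) : 0 ≤ ε ^ i * (1 - ε) ^ (n - i) * n.choose i := by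
    have : 0 ≤ 1 - ε := by linarith
    positivity
  suffices h : (∑ i ∈ Finset.range d, (n.choose i : ℝ)) * 2 ^ (-x) < 1 by
    rwa [rpow_neg zero_le_two, mul_inv_lt_iff₀ (rpow_pos_of_pos two_pos x), one_mul] at h
  rw [Finset.sum_mul]
  calc _ ≤ ∑ i ∈ Finset.range d, ε ^ i * (1 - ε) ^ (n - i) * n.choose i :=
        Finset.sum_le_sum fun i hi => hterm i (Finset.mem_range.mp hi)
    _ < ∑ i ∈ Finset.range (n + 1), ε ^ i * (1 - ε) ^ (n - i) * n.choose i := by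
      refine Finset.sum_lt_sum_of_subset (Finset.range_subset_range.mpr (by omega))
        (i := d) (Finset.mem_range.mpr (by omega)) Finset.notMem_range_self ?_ fun j _ _ => hpos j
      have : (0 : ℝ) < n.choose d := by exact_mod_cast Nat.choose_pos hdn
      have : 0 < 1 - ε := by linarith
      positivity
    _ = 1 := by rw [← add_pow, add_sub_cancel, one_pow]

end Entropy

theorem stmt17_general (n : ℕ) (δ ε : ℝ)
    (hε0 : 0 < ε) (hε2 : ε ≤ 1 / 2)
    (hεδ : -ε * Real.logb 2 ε - (1 - ε) * Real.logb 2 (1 - ε) = δ)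
    (H : Set (List Bool)) (hH : H ⊆ treeVerts n) (hw : δ * n ≤ weight H) :
    ∃ f : List Bool → List Bool, IsRegEmb ⌊ε * n⌋₊ f ∧
      (∀ x : List Bool, x.length < ⌊ε * n⌋₊ → f x ∈ H) ∧
      {l : ℕ | ∃ x : List Bool, x.length < ⌊ε * n⌋₊ ∧ (f x).length = l} ⊆
        Set.Iio n ∧
      {l : ℕ | ∃ x : List Bool, x.length < ⌊ε * n⌋₊ ∧ (f x).length = l}.ncard =
        ⌊ε * n⌋₊ := by
  suffices ∃ σ ∈ sigs H, ⌊ε * n⌋₊ ≤ σ.ncard by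
    obtain ⟨σ, hσ, hd⟩ := this
    exact exists_regEmb_of_mem_sigs hH hσ hd
  by_contra! hsmall
  have hcount : ((sigs H).ncard : ℝ) ≤ ∑ i ∈ Finset.range ⌊ε * n⌋₊, (n.choose i : ℝ) := by
    exact_mod_cast ncard_le_sum_choose fun σ hσ => ⟨subset_Iio_of_mem_sigs hH hσ, hsmall σ hσ⟩
  have hentropy :=
    sum_choose_lt_two_rpow_entropy_mul hε0 hε2 (n := n) (Nat.floor_le (by positivity))
  rw [hεδ] at hentropy
  have hweight := Real.rpow_le_rpow_of_exponent_le one_le_two hw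
  linarith [two_rpow_weight_le_ncard_sigs n hH]

/-- If `H ⊆ V(T_n)` has `w(H) ≥ δn` for `δ ∈ (0,1)` and `ε = h⁻¹(δ)` (i.e.
`ε ∈ (0,1/2]` with binary entropy `h(ε) = δ`), then `H` contains a replica of
`T_d` with `d = ⌊εn⌋`, and the set of levels of `T_n` occupied by the replica
is a subset of `{0,…,n-1}` of size `⌊εn⌋`. -/
theorem stmt17 (n : ℕ) (δ ε : ℝ) (hδ0 : 0 < δ) (hδ1 : δ < 1)
    (hε0 : 0 < ε) (hε2 : ε ≤ 1 / 2)
    (hεδ : -ε * Real.logb 2 ε - (1 - ε) * Real.logb 2 (1 - ε) = δ)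
    (H : Set (List Bool)) (hH : H ⊆ treeVerts n) (hw : δ * n ≤ weight H) :
    ∃ f : List Bool → List Bool, IsRegEmb ⌊ε * n⌋₊ f ∧
      (∀ x : List Bool, x.length < ⌊ε * n⌋₊ → f x ∈ H) ∧
      {l : ℕ | ∃ x : List Bool, x.length < ⌊ε * n⌋₊ ∧ (f x).length = l} ⊆
        Set.Iio n ∧
      {l : ℕ | ∃ x : List Bool, x.length < ⌊ε * n⌋₊ ∧ (f x).length = l}.ncard =
        ⌊ε * n⌋₊ :=
  stmt17_general n δ ε hε0 hε2 hεδ H hH hw
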